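/- arXiv:1409.7546 — 4 statements merged into one kernel-verified Lean document; each statement's English description precedes it below -/
import Mathlib

section
/- Let E be the set of CCR-efficient DMUs. If for DMU_k ∈ E and some input index l the super-efficiency-type linear program min θ subject to Σ_{j∈E∖{k}} λ_j x_{lj} ≤ θ x_{lk}, Σ_{j∈E∖{k}} λ_j x_{ij} ≤ x_{ik} (i ≠ l), Σ_{j∈E∖{k}} λ_j y_{rj} ≥ y_{rk} (all r), λ ≥ 0 has optimal value θ* > 1 or is infeasible, then DMU_k is extreme: the system Σ_{j∈E∖{k}} λ_j X_j = X_k, Σ_{j∈E∖{k}} λ_j Y_j = Y_k, λ ≥ 0 has no solution; equivalently DMU_k cannot be written as a nonnegative combination of the other efficient DMUs. -/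
/-- Feasibility of the super-efficiency model (5) for DMU `k`, input index `li`,
radial value `θ` and intensity vector `l` (supported on `E \ {k}`). -/
def Feas5 {n m s : ℕ} (X : Fin n → Fin m → ℝ) (Y : Fin n → Fin s → ℝ)
    (E : Finset (Fin n)) (k : Fin n) (li : Fin m) (θ : ℝ) (l : Fin n → ℝ) : Prop :=
  (∀ j, 0 ≤ l j) ∧
  (∑ j ∈ E.erase k, l j * X j li ≤ θ * X k li) ∧
  (∀ i, i ≠ li → ∑ j ∈ E.erase k, l j * X j i ≤ X k i) ∧
  (∀ r, Y k r ≤ ∑ j ∈ E.erase k, l j * Y j r)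

lemma feas5_one_of_combination {n m s : ℕ} (X : Fin n → Fin m → ℝ) (Y : Fin n → Fin s → ℝ)
    (E : Finset (Fin n)) (k : Fin n) (li : Fin m) {l : Fin n → ℝ} (hl : ∀ j, 0 ≤ l j)
    (hXl : ∀ i, ∑ j ∈ E.erase k, l j * X j i = X k i)
    (hYl : ∀ r, ∑ j ∈ E.erase k, l j * Y j r = Y k r) :
    Feas5 X Y E k li 1 l :=
  ⟨hl, by rw [hXl li, one_mul], fun i _ => (hXl i).le, fun r => (hYl r).ge⟩

theorem superefficiency_gt_one_implies_extreme_general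
    {n m s : ℕ} (X : Fin n → Fin m → ℝ) (Y : Fin n → Fin s → ℝ)
    (E : Finset (Fin n)) (k : Fin n)
    (h : ∃ li : Fin m, ∀ (θ : ℝ) (l : Fin n → ℝ), Feas5 X Y E k li θ l → 1 < θ) :
    ¬ ∃ l : Fin n → ℝ, (∀ j, 0 ≤ l j) ∧
      (∀ i, ∑ j ∈ E.erase k, l j * X j i = X k i) ∧
      (∀ r, ∑ j ∈ E.erase k, l j * Y j r = Y k r) := by
  rintro ⟨l, hl, hXl, hYl⟩
  obtain ⟨li, hli⟩ := h
  exact (hli 1 l (feas5_one_of_combination X Y E k li hl hXl hYl)).false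

/-- Property 1 (one direction): if for some input `l` the super-efficiency LP (5) is
infeasible or has optimal value `θ* > 1` (every feasible value exceeds 1), then `DMU_k`
is extreme: it is not a nonnegative combination of the other efficient DMUs. -/
theorem superefficiency_gt_one_implies_extreme
    {n m s : ℕ} (X : Fin n → Fin m → ℝ) (Y : Fin n → Fin s → ℝ)
    (hX : ∀ j i, 0 < X j i) (hY : ∀ j r, 0 < Y j r)
    (E : Finset (Fin n)) (k : Fin n) (hk : k ∈ E)
    (h : ∃ li : Fin m, ∀ (θ : ℝ) (l : Fin n → ℝ), Feas5 X Y E k li θ l → 1 < θ) :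
    ¬ ∃ l : Fin n → ℝ, (∀ j, 0 ≤ l j) ∧
      (∀ i, ∑ j ∈ E.erase k, l j * X j i = X k i) ∧
      (∀ r, ∑ j ∈ E.erase k, l j * Y j r = Y k r) :=
  superefficiency_gt_one_implies_extreme_general X Y E k h
end

section
/- Conversely, if DMU_k is a non-extreme DMU of E (i.e., X_k = Σ_{j∈E∖{k}} λ̄_j X_j and Y_k = Σ_{j∈E∖{k}} λ̄_j Y_j for some λ̄ ≥ 0, possibly after the cone rescaling 1/(1−λ̄_k) when λ̄_k < 1), then for every input index l the program min θ subject to Σ_{j∈E∖{k}} λ_j x_{lj} ≤ θ x_{lk}, Σ_{j∈E∖{k}} λ_j x_{ij} ≤ x_{ik} (i ≠ l), Σ_{j∈E∖{k}} λ_j y_{rj} ≥ y_{rk}, λ ≥ 0 is feasible with optimal value θ* ≤ 1. -/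
theorem nonextreme_implies_superefficiency_feasible_le_one_general
    {n m s : ℕ} (X : Fin n → Fin m → ℝ) (Y : Fin n → Fin s → ℝ)
    (E : Finset (Fin n)) (k : Fin n)
    (hnonextreme : ∃ lb : Fin n → ℝ, (∀ j, 0 ≤ lb j) ∧
      (∀ i, ∑ j ∈ E.erase k, lb j * X j i = X k i) ∧
      (∀ r, ∑ j ∈ E.erase k, lb j * Y j r = Y k r)) :
    ∀ li : Fin m, ∃ (θ : ℝ) (l : Fin n → ℝ), θ ≤ 1 ∧ Feas5 X Y E k li θ l := by
  obtain ⟨lb, hlb_nonneg, hX_eq, hY_eq⟩ := hnonextreme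
  intro li
  refine ⟨1, lb, le_rfl, hlb_nonneg, ?_, fun i _ => (hX_eq i).le, fun r => (hY_eq r).ge⟩
  rw [hX_eq li, one_mul]

/-- Property 1 (converse direction): if `DMU_k` is a non-extreme efficient DMU, i.e. a
nonnegative combination of the other efficient DMUs, then for every input index `li`
the super-efficiency model (5) is feasible with optimal value `θ* ≤ 1`. -/
theorem nonextreme_implies_superefficiency_feasible_le_one
    {n m s : ℕ} (X : Fin n → Fin m → ℝ) (Y : Fin n → Fin s → ℝ)
    (hX : ∀ j i, 0 < X j i) (hY : ∀ j r, 0 < Y j r)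
    (E : Finset (Fin n)) (k : Fin n) (hk : k ∈ E)
    (hnonextreme : ∃ lb : Fin n → ℝ, (∀ j, 0 ≤ lb j) ∧
      (∀ i, ∑ j ∈ E.erase k, lb j * X j i = X k i) ∧
      (∀ r, ∑ j ∈ E.erase k, lb j * Y j r = Y k r)) :
    ∀ li : Fin m, ∃ (θ : ℝ) (l : Fin n → ℝ), θ ≤ 1 ∧ Feas5 X Y E k li θ l :=
  nonextreme_implies_superefficiency_feasible_le_one_general X Y E k hnonextreme
end

section
/- If DMU_k is an extreme CCR-efficient DMU and model (5) for input l (min θ s.t. Σ_{j∈E∖{k}} λ_j x_{lj} ≤ θ x_{lk}, Σ_{j∈E∖{k}} λ_j x_{ij} ≤ x_{ik} for i ≠ l, Σ_{j∈E∖{k}} λ_j y_{rj} ≥ y_{rk}, λ ≥ 0) is feasible, then its optimal value satisfies θ* ≥ 1. Combined with the non-extreme case, θ* = 1 for all l (and φ* = 1 for all q in the output version) if and only if DMU_k is a non-extreme CCR-efficient DMU. -/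
/-- Feasibility of the output-oriented super-efficiency model (6). -/
def Feas6 {n m s : ℕ} (X : Fin n → Fin m → ℝ) (Y : Fin n → Fin s → ℝ)
    (E : Finset (Fin n)) (k : Fin n) (q : Fin s) (φ : ℝ) (mu : Fin n → ℝ) : Prop :=
  (∀ j, 0 ≤ mu j) ∧
  (∀ i, ∑ j ∈ E.erase k, mu j * X j i ≤ X k i) ∧
  (φ * Y k q ≤ ∑ j ∈ E.erase k, mu j * Y j q) ∧
  (∀ r, r ≠ q → Y k r ≤ ∑ j ∈ E.erase k, mu j * Y j r)

/-- `DMU_k` is non-extreme: a nonnegative combination of the other efficient DMUs. -/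
def NonExtreme {n m s : ℕ} (X : Fin n → Fin m → ℝ) (Y : Fin n → Fin s → ℝ)
    (E : Finset (Fin n)) (k : Fin n) : Prop :=
  ∃ l : Fin n → ℝ, (∀ j, 0 ≤ l j) ∧
    (∀ i, ∑ j ∈ E.erase k, l j * X j i = X k i) ∧
    (∀ r, ∑ j ∈ E.erase k, l j * Y j r = Y k r)

open Finset Function

theorem Finset.sum_update_zero_mul {ι R : Type*} [DecidableEq ι] [NonUnitalNonAssocSemiring R]
    {E : Finset ι} {k : ι} (hk : k ∈ E) (l f : ι → R) :
    ∑ j ∈ E, update l k 0 j * f j = ∑ j ∈ E.erase k, l j * f j := by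
  rw [← add_sum_erase _ _ hk, update_self, zero_mul, zero_add]
  exact sum_congr rfl fun j hj => by rw [update_of_ne (ne_of_mem_erase hj)]

section

variable {n m s : ℕ} {X : Fin n → Fin m → ℝ} {Y : Fin n → Fin s → ℝ} {E : Finset (Fin n)}
  {k : Fin n}

def CCREfficient (X : Fin n → Fin m → ℝ) (Y : Fin n → Fin s → ℝ) (E : Finset (Fin n))
    (k : Fin n) : Prop :=
  ¬ ∃ l : Fin n → ℝ, (∀ j, 0 ≤ l j) ∧
    (∀ i, ∑ j ∈ E, l j * X j i ≤ X k i) ∧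
    (∀ r, Y k r ≤ ∑ j ∈ E, l j * Y j r) ∧
    ¬ ((∀ i, ∑ j ∈ E, l j * X j i = X k i) ∧ (∀ r, ∑ j ∈ E, l j * Y j r = Y k r))

theorem CCREfficient.sum_erase_eq (heff : CCREfficient X Y E k) (hk : k ∈ E) {l : Fin n → ℝ}
    (h0 : ∀ j, 0 ≤ l j) (hx : ∀ i, ∑ j ∈ E.erase k, l j * X j i ≤ X k i)
    (hy : ∀ r, Y k r ≤ ∑ j ∈ E.erase k, l j * Y j r) :
    (∀ i, ∑ j ∈ E.erase k, l j * X j i = X k i) ∧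
      (∀ r, ∑ j ∈ E.erase k, l j * Y j r = Y k r) := by
  have h0' : ∀ j, 0 ≤ update l k 0 j := fun j => by
    rcases eq_or_ne j k with rfl | hj
    · simp
    · simpa [update_of_ne hj] using h0 j
  by_contra hne
  exact heff ⟨update l k 0, h0', by simpa only [sum_update_zero_mul hk] using hx,
    by simpa only [sum_update_zero_mul hk] using hy,
    by simpa only [sum_update_zero_mul hk] using hne⟩

variable {li : Fin m} {q : Fin s} {θ φ : ℝ} {l : Fin n → ℝ}

theorem Feas5.sum_le (h : Feas5 X Y E k li θ l) (hθ : θ * X k li ≤ X k li) (i : Fin m) :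
    ∑ j ∈ E.erase k, l j * X j i ≤ X k i := by
  rcases eq_or_ne i li with rfl | hi
  · exact h.2.1.trans hθ
  · exact h.2.2.1 i hi

theorem Feas6.le_sum (h : Feas6 X Y E k q φ l) (hφ : Y k q ≤ φ * Y k q) (r : Fin s) :
    Y k r ≤ ∑ j ∈ E.erase k, l j * Y j r := by
  rcases eq_or_ne r q with rfl | hr
  · exact hφ.trans h.2.2.1
  · exact h.2.2.2 r hr

theorem CCREfficient.one_le_of_feas5 (heff : CCREfficient X Y E k) (hk : k ∈ E)
    (hXk : 0 < X k li) (h : Feas5 X Y E k li θ l) : 1 ≤ θ := by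
  by_contra! hθ
  have hlt : θ * X k li < X k li := mul_lt_of_lt_one_left hXk hθ
  have heq := (heff.sum_erase_eq hk h.1 (h.sum_le hlt.le) h.2.2.2).1 li
  linarith [h.2.1]

theorem CCREfficient.le_one_of_feas6 (heff : CCREfficient X Y E k) (hk : k ∈ E)
    (hYk : 0 < Y k q) (h : Feas6 X Y E k q φ l) : φ ≤ 1 := by
  by_contra! hφ
  have hlt : Y k q < φ * Y k q := lt_mul_of_one_lt_left hYk hφ
  have heq := (heff.sum_erase_eq hk h.1 h.2.1 (h.le_sum hlt.le)).2 q
  linarith [h.2.2.1]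

theorem CCREfficient.nonExtreme_of_feas5 (heff : CCREfficient X Y E k) (hk : k ∈ E)
    (h : Feas5 X Y E k li 1 l) : NonExtreme X Y E k :=
  ⟨l, h.1, heff.sum_erase_eq hk h.1 (h.sum_le (one_mul _).le) h.2.2.2⟩

theorem CCREfficient.nonExtreme_of_feas6 (heff : CCREfficient X Y E k) (hk : k ∈ E)
    (h : Feas6 X Y E k q 1 l) : NonExtreme X Y E k :=
  ⟨l, h.1, heff.sum_erase_eq hk h.1 h.2.1 (h.le_sum (one_mul _).ge)⟩

theorem NonExtreme.exists_feas5 (h : NonExtreme X Y E k) (li : Fin m) :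
    ∃ l, Feas5 X Y E k li 1 l :=
  let ⟨l, h0, hx, hy⟩ := h
  ⟨l, h0, (one_mul (X k li)).symm ▸ (hx li).le, fun i _ => (hx i).le, fun r => (hy r).ge⟩

theorem NonExtreme.exists_feas6 (h : NonExtreme X Y E k) (q : Fin s) :
    ∃ mu, Feas6 X Y E k q 1 mu :=
  let ⟨l, h0, hx, hy⟩ := h
  ⟨l, h0, fun i => (hx i).le, (one_mul (Y k q)).symm ▸ (hy q).ge, fun r _ => (hy r).ge⟩

end

/-- Property 1 (second half) together with its Corollary. Suppose `DMU_k` is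
CCR-efficient, i.e. non-dominated by any point producible from the efficient set `E`.
Then: (1) if `DMU_k` is extreme and the model (5) at input `li` is feasible, its optimal
value satisfies `θ* ≥ 1` (every feasible value is at least 1); and (2) `θ* = 1` for all
inputs and `φ* = 1` for all outputs if and only if `DMU_k` is non-extreme. -/
theorem superefficiency_ge_one_and_corollary
    {n m s : ℕ} (X : Fin n → Fin m → ℝ) (Y : Fin n → Fin s → ℝ)
    (hX : ∀ j i, 0 < X j i) (hY : ∀ j r, 0 < Y j r)
    (E : Finset (Fin n)) (k : Fin n) (hk : k ∈ E)
    (heff : ¬ ∃ l : Fin n → ℝ, (∀ j, 0 ≤ l j) ∧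
      (∀ i, ∑ j ∈ E, l j * X j i ≤ X k i) ∧
      (∀ r, Y k r ≤ ∑ j ∈ E, l j * Y j r) ∧
      ¬ ((∀ i, ∑ j ∈ E, l j * X j i = X k i) ∧ (∀ r, ∑ j ∈ E, l j * Y j r = Y k r))) :
    ((¬ NonExtreme X Y E k) →
      ∀ li : Fin m, (∃ θ l, Feas5 X Y E k li θ l) →
        ∀ (θ : ℝ) (l : Fin n → ℝ), Feas5 X Y E k li θ l → 1 ≤ θ) ∧
    (((∀ li : Fin m, (∃ l, Feas5 X Y E k li 1 l) ∧
        (∀ (θ : ℝ) (l : Fin n → ℝ), Feas5 X Y E k li θ l → 1 ≤ θ)) ∧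
      (∀ q : Fin s, (∃ mu, Feas6 X Y E k q 1 mu) ∧
        (∀ (φ : ℝ) (mu : Fin n → ℝ), Feas6 X Y E k q φ mu → φ ≤ 1))) ↔
      NonExtreme X Y E k) := by
  have heff : CCREfficient X Y E k := heff
  have hθ : ∀ li θ l, Feas5 X Y E k li θ l → 1 ≤ θ := fun li _ _ =>
    heff.one_le_of_feas5 hk (hX k li)
  have hφ : ∀ q φ mu, Feas6 X Y E k q φ mu → φ ≤ 1 := fun q _ _ =>
    heff.le_one_of_feas6 hk (hY k q)
  refine ⟨fun _ li _ => hθ li, ⟨fun ⟨h5, h6⟩ => ?_, fun h => ?_⟩⟩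
  · rcases isEmpty_or_nonempty (Fin m) with hm | ⟨⟨li⟩⟩
    · rcases isEmpty_or_nonempty (Fin s) with hs | ⟨⟨q⟩⟩
      · exact ⟨0, fun _ => le_rfl, isEmptyElim, isEmptyElim⟩
      · obtain ⟨mu, hmu⟩ := (h6 q).1
        exact heff.nonExtreme_of_feas6 hk hmu
    · obtain ⟨l, hl⟩ := (h5 li).1
      exact heff.nonExtreme_of_feas5 hk hl
  · exact ⟨fun li => ⟨h.exists_feas5 li, hθ li⟩, fun q => ⟨h.exists_feas6 q, hφ q⟩⟩
end

section
/- Supporting hyperplane test (Theorem 4): Let D ⊆ G be a set of m+s−1 points of the efficient/weak-efficient data set and let P ∈ ℝ^{m+s} define the hyperplane Pᵗz = 0 through D (z = (x,y)). Let w = (x^w, y^w) with x_i^w = max_j x_{ij} and y_r^w = min_j y_{rj}. If Pᵗz_j = 0 for j ∈ D, Pᵗz_j ≤ 0 for j ∈ G∖D, and Pᵗw < 0, then Pᵗz = 0 is a supporting hyperplane of the CRS production possibility set T: Pᵗz ≤ 0 for every z ∈ T and Pᵗz = 0 for some z ∈ T, z ≠ 0. -/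
/-!
`T` is the cone spanned by the data points together with free disposal (more input, less
output). Since `u, v ≥ 0`, the functional `uᵗy - vᵗx` can only decrease along disposal, so it is
nonpositive on `T` once it is nonpositive at the data points. Any point of `D`, which is nonempty
because `m + s - 1 ≥ 1`, is a nonzero point of `T` on the hyperplane.
-/

/-- The CRS production possibility set generated by the data points indexed by `G`. -/
def PPSG {n m s : ℕ} (x : Fin n → Fin m → ℝ) (y : Fin n → Fin s → ℝ)
    (G : Finset (Fin n)) : Set ((Fin m → ℝ) × (Fin s → ℝ)) :=
  {p | ∃ l : Fin n → ℝ, (∀ j, 0 ≤ l j) ∧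
    (∀ i, ∑ j ∈ G, l j * x j i ≤ p.1 i) ∧
    (∀ r, 0 ≤ p.2 r) ∧ (∀ r, p.2 r ≤ ∑ j ∈ G, l j * y j r)}

open Finset

theorem Finset.sum_mul_sum_mul_comm {ι κ R : Type*} [CommSemiring R] (t : Finset ι) (t' : Finset κ)
    (u : κ → R) (l : ι → R) (a : ι → κ → R) :
    ∑ r ∈ t', u r * ∑ j ∈ t, l j * a j r = ∑ j ∈ t, l j * ∑ r ∈ t', u r * a j r := by
  simp only [mul_sum]
  rw [sum_comm]
  exact sum_congr rfl fun _ _ => sum_congr rfl fun _ _ => mul_left_comm _ _ _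

section PPSG

variable {n m s : ℕ} {x : Fin n → Fin m → ℝ} {y : Fin n → Fin s → ℝ} {G : Finset (Fin n)}

theorem mk_mem_PPSG {j : Fin n} (hj : j ∈ G) (hy : ∀ r, 0 ≤ y j r) : (x j, y j) ∈ PPSG x y G := by
  have hsum (f : Fin n → ℝ) : ∑ k ∈ G, (Pi.single j 1 : Fin n → ℝ) k * f k = f j := by
    rw [sum_eq_single_of_mem j hj fun k _ hk => by simp [hk]]
    simp
  refine ⟨Pi.single j 1, fun k => ?_, fun i => ?_, hy, fun r => ?_⟩
  · by_cases hk : k = j <;> simp [hk]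
  · exact (hsum (x · i)).le
  · exact (hsum (y · r)).ge

theorem PPSG.sum_mul_le_sum_mul {u : Fin s → ℝ} {v : Fin m → ℝ} (hu : ∀ r, 0 ≤ u r)
    (hv : ∀ i, 0 ≤ v i) (hG : ∀ j ∈ G, ∑ r, u r * y j r ≤ ∑ i, v i * x j i)
    {p : (Fin m → ℝ) × (Fin s → ℝ)} (hp : p ∈ PPSG x y G) :
    ∑ r, u r * p.2 r ≤ ∑ i, v i * p.1 i := by
  obtain ⟨l, hl, hlx, -, hly⟩ := hp
  calc ∑ r, u r * p.2 r
      ≤ ∑ r, u r * ∑ j ∈ G, l j * y j r :=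
        sum_le_sum fun r _ => mul_le_mul_of_nonneg_left (hly r) (hu r)
    _ = ∑ j ∈ G, l j * ∑ r, u r * y j r := sum_mul_sum_mul_comm _ _ _ _ _
    _ ≤ ∑ j ∈ G, l j * ∑ i, v i * x j i :=
        sum_le_sum fun j hj => mul_le_mul_of_nonneg_left (hG j hj) (hl j)
    _ = ∑ i, v i * ∑ j ∈ G, l j * x j i := (sum_mul_sum_mul_comm _ _ _ _ _).symm
    _ ≤ ∑ i, v i * p.1 i := sum_le_sum fun i _ => mul_le_mul_of_nonneg_left (hlx i) (hv i)

end PPSG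

theorem supporting_hyperplane_test_general
    {n m s : ℕ} (hm : 0 < m) (hs : 0 < s)
    (x : Fin n → Fin m → ℝ) (y : Fin n → Fin s → ℝ)
    (hy : ∀ j r, 0 < y j r)
    (G D : Finset (Fin n)) (hDG : D ⊆ G)
    (hcard : D.card = m + s - 1)
    (u : Fin s → ℝ) (v : Fin m → ℝ)
    (hu : ∀ r, 0 ≤ u r) (hv : ∀ i, 0 ≤ v i)
    (hD0 : ∀ j ∈ D, ∑ r, u r * y j r - ∑ i, v i * x j i = 0)
    (hGle : ∀ j ∈ G, j ∉ D → ∑ r, u r * y j r - ∑ i, v i * x j i ≤ 0) :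
    (∀ p ∈ PPSG x y G, ∑ r, u r * p.2 r - ∑ i, v i * p.1 i ≤ 0) ∧
    ∃ p ∈ PPSG x y G, p ≠ 0 ∧ ∑ r, u r * p.2 r - ∑ i, v i * p.1 i = 0 := by
  have hG : ∀ j ∈ G, ∑ r, u r * y j r ≤ ∑ i, v i * x j i := fun j hj => by
    by_cases hjD : j ∈ D
    · exact (sub_eq_zero.1 (hD0 j hjD)).le
    · exact sub_nonpos.1 (hGle j hj hjD)
  obtain ⟨j, hj⟩ : D.Nonempty := card_pos.1 (by omega)
  refine ⟨fun p hp => sub_nonpos.2 (PPSG.sum_mul_le_sum_mul hu hv hG hp),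
    (x j, y j), mk_mem_PPSG (hDG hj) fun r => (hy j r).le, fun h => ?_, hD0 j hj⟩
  exact (hy j ⟨0, hs⟩).ne' (congrFun (congrArg Prod.snd h) _)

/-- Theorem 4 (supporting hyperplane test): if `Pᵗz = uᵗy - vᵗx` vanishes on the
`m+s-1` points of `D`, is nonpositive on the rest of `G`, and is negative at the
negative-ideal point `w`, then `Pᵗz = 0` is a supporting hyperplane of the PPS. -/
theorem supporting_hyperplane_test
    {n m s : ℕ} (hm : 0 < m) (hs : 0 < s)
    (x : Fin n → Fin m → ℝ) (y : Fin n → Fin s → ℝ)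
    (hx : ∀ j i, 0 < x j i) (hy : ∀ j r, 0 < y j r)
    (G D : Finset (Fin n)) (hGne : G.Nonempty) (hDG : D ⊆ G)
    (hcard : D.card = m + s - 1)
    (u : Fin s → ℝ) (v : Fin m → ℝ)
    (hu : ∀ r, 0 ≤ u r) (hv : ∀ i, 0 ≤ v i)
    (hD0 : ∀ j ∈ D, ∑ r, u r * y j r - ∑ i, v i * x j i = 0)
    (hGle : ∀ j ∈ G, j ∉ D → ∑ r, u r * y j r - ∑ i, v i * x j i ≤ 0)
    (hw : ∑ r, u r * (G.inf' hGne fun j => y j r) -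
      ∑ i, v i * (G.sup' hGne fun j => x j i) < 0) :
    (∀ p ∈ PPSG x y G, ∑ r, u r * p.2 r - ∑ i, v i * p.1 i ≤ 0) ∧
    ∃ p ∈ PPSG x y G, p ≠ 0 ∧ ∑ r, u r * p.2 r - ∑ i, v i * p.1 i = 0 :=
  supporting_hyperplane_test_general hm hs x y hy G D hDG hcard u v hu hv hD0 hGle
end
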